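/- arXiv:adap-org/9808003 — 3 statements merged into one kernel-verified Lean document; each statement's English description precedes it below -/
import Mathlib

section
/- Let g > 1 and Z₀ > 0 be real numbers. The quadratic equation g·Z₀·ζ² − ((g+1)·Z₀ + (g−1))·ζ + Z₀ = 0 (equivalently, (ζ − 1)(g·ζ − 1) = (g−1)·ζ/Z₀) has two distinct real roots ζ₋ < ζ₊ which satisfy ζ₋·ζ₊ = 1/g, 0 < ζ₋ < 1/g, and ζ₊ > 1. -/
/-! With `f ζ = g Z₀ ζ² − ((g+1) Z₀ + (g−1)) ζ + Z₀` one computes `f 1 = −(g−1) < 0` and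
`f (1/g) = −(g−1)/g < 0`. A quadratic with positive leading coefficient that takes a negative
value has two real roots, and it is negative exactly strictly between them, so
`ζ₋ < 1/g < 1 < ζ₊`. Vieta gives `ζ₋ ζ₊ = Z₀ / (g Z₀) = 1/g`, which forces `ζ₋ > 0`. -/

lemma exists_factorization_of_neg {a b c x₀ : ℝ} (ha : 0 < a)
    (hx₀ : a * x₀ ^ 2 - b * x₀ + c < 0) :
    ∃ r₁ r₂ : ℝ, r₁ < r₂ ∧ ∀ x, a * x ^ 2 - b * x + c = a * (x - r₁) * (x - r₂) := by
  set s := √(b ^ 2 - 4 * a * c)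
  -- completing the square: `4 a f(x₀) = (2 a x₀ - b)² - discriminant`
  have hdisc : 0 < b ^ 2 - 4 * a * c := by nlinarith [sq_nonneg (2 * a * x₀ - b)]
  have hs : s ^ 2 = b ^ 2 - 4 * a * c := Real.sq_sqrt hdisc.le
  have hs_pos : 0 < s := Real.sqrt_pos.mpr hdisc
  refine ⟨(b - s) / (2 * a), (b + s) / (2 * a), by gcongr; linarith, fun x => ?_⟩
  field_simp
  linear_combination hs

lemma mem_Ioo_of_mul_sub_mul_sub_neg {a r₁ r₂ x : ℝ} (ha : 0 < a) (hr : r₁ ≤ r₂)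
    (h : a * (x - r₁) * (x - r₂) < 0) : x ∈ Set.Ioo r₁ r₂ := by
  have hneg : (x - r₁) * (x - r₂) < 0 := neg_of_mul_neg_right (by rwa [mul_assoc] at h) ha.le
  rcases mul_neg_iff.mp hneg with ⟨h₁, h₂⟩ | ⟨h₁, h₂⟩
  · exact ⟨by linarith, by linarith⟩
  · exact absurd hr (by linarith)

/-- The characteristic quadratic `g·Z₀·ζ² − ((g+1)·Z₀ + (g−1))·ζ + Z₀ = 0`
(for `g > 1`, `Z₀ > 0`) has two distinct real roots `ζ₋ < ζ₊` with
`ζ₋·ζ₊ = 1/g`, `0 < ζ₋ < 1/g`, and `ζ₊ > 1`. -/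
theorem characteristic_equation_roots (g Z₀ : ℝ) (hg : 1 < g) (hZ₀ : 0 < Z₀) :
    ∃ ζm ζp : ℝ, ζm < ζp ∧
      g * Z₀ * ζm ^ 2 - ((g + 1) * Z₀ + (g - 1)) * ζm + Z₀ = 0 ∧
      g * Z₀ * ζp ^ 2 - ((g + 1) * Z₀ + (g - 1)) * ζp + Z₀ = 0 ∧
      (∀ ζ : ℝ, g * Z₀ * ζ ^ 2 - ((g + 1) * Z₀ + (g - 1)) * ζ + Z₀ = 0 →
        ζ = ζm ∨ ζ = ζp) ∧
      ζm * ζp = 1 / g ∧ 0 < ζm ∧ ζm < 1 / g ∧ 1 < ζp := by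
  have hg₀ : 0 < g := by linarith
  have ha : 0 < g * Z₀ := by positivity
  obtain ⟨ζm, ζp, hlt, hfac⟩ :=
    exists_factorization_of_neg (b := (g + 1) * Z₀ + (g - 1)) (c := Z₀) (x₀ := 1) ha (by linarith)
  have h_inv_g : ζm < 1 / g := by
    refine (mem_Ioo_of_mul_sub_mul_sub_neg ha hlt.le ?_).1
    rw [← hfac]
    field_simp
    linarith
  have h_one : 1 < ζp := (mem_Ioo_of_mul_sub_mul_sub_neg ha hlt.le (by rw [← hfac]; linarith)).2
  have hprod : ζm * ζp = 1 / g := by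
    rw [eq_div_iff hg₀.ne']
    apply mul_left_cancel₀ hZ₀.ne'
    linear_combination -(hfac 0)
  have hpos : 0 < ζm := pos_of_mul_pos_left (by rw [hprod]; positivity) (by linarith)
  refine ⟨ζm, ζp, hlt, by simp [hfac], by simp [hfac], fun ζ hζ => ?_, hprod, hpos, h_inv_g, h_one⟩
  rw [hfac] at hζ
  simpa [ha.ne', sub_eq_zero] using hζ
end

section
/- Let In and Out be finite sets, let J : In ∪ Out → ℝ be flows, θ : In → ℝ, θ_out ∈ ℝ, θ_c ≠ 0, let R⁰ : In ∪ Out → ℝ be nonzero constants, let P_b ∈ ℝ, and let P_in : In → ℝ and P_out : Out → ℝ be potentials. Assume the conservation laws Σ_{i∈In} J_i = Σ_{i∈Out} J_i and Σ_{i∈In} J_i·θ_i = θ_out·Σ_{i∈Out} J_i, and the Kirchhoff relations P_in(i) − P_b = J_i·R⁰_i·(1 − θ_i/θ_c) for each i ∈ In and P_b − P_out(i) = J_i·R⁰_i·(1 − θ_out/θ_c) for each i ∈ Out. Then Σ_{i∈In} (P_in(i) − P_b)/R⁰_i = Σ_{i∈Out} (P_b − P_out(i))/R⁰_i. -/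
open Finset

/-- At a node `b` of the draining bed of an irregular supplying network, the
conservation laws and the Kirchhoff relations with resistances
`R_i(θ) = R⁰_i·(1 − θ/θ_c)` imply the linear-dependence identity (irr4):
`Σ_{i∈In} (P_in(i) − P_b)/R⁰_i = Σ_{i∈Out} (P_b − P_out(i))/R⁰_i`. -/
theorem node_kirchhoff_linear_dependence
    {ι : Type*} [DecidableEq ι] (In Out : Finset ι)
    (J θ : ι → ℝ) (θout θc : ℝ) (hθc : θc ≠ 0)
    (R0 : ι → ℝ) (hR0 : ∀ i ∈ In ∪ Out, R0 i ≠ 0)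
    (Pb : ℝ) (Pin Pout : ι → ℝ)
    (hmass : ∑ i ∈ In, J i = ∑ i ∈ Out, J i)
    (hprod : ∑ i ∈ In, J i * θ i = θout * ∑ i ∈ Out, J i)
    (hkin : ∀ i ∈ In, Pin i - Pb = J i * R0 i * (1 - θ i / θc))
    (hkout : ∀ i ∈ Out, Pb - Pout i = J i * R0 i * (1 - θout / θc)) :
    ∑ i ∈ In, (Pin i - Pb) / R0 i = ∑ i ∈ Out, (Pb - Pout i) / R0 i := by
  have h1 : ∑ i ∈ In, (Pin i - Pb) / R0 i = ∑ i ∈ In, J i * (1 - θ i / θc) := by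
    refine Finset.sum_congr rfl fun i hi => ?_
    rw [hkin i hi]
    field_simp [hR0 i (Finset.mem_union_left _ hi)]
  have h2 : ∑ i ∈ Out, (Pb - Pout i) / R0 i = ∑ i ∈ Out, J i * (1 - θout / θc) := by
    refine Finset.sum_congr rfl fun i hi => ?_
    rw [hkout i hi]
    field_simp [hR0 i (Finset.mem_union_right _ hi)]
  rw [h1, h2]
  have : ∑ i ∈ In, J i * (1 - θ i / θc)
      = (∑ i ∈ In, J i) - (∑ i ∈ In, J i * θ i) / θc := by
    rw [Finset.sum_div, ← Finset.sum_sub_distrib]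
    exact Finset.sum_congr rfl fun i _ => by ring
  rw [this, hmass, hprod, Finset.mul_sum, Finset.sum_div, ← Finset.sum_sub_distrib]
  exact Finset.sum_congr rfl fun i _ => by ring
end

section
/- Let ι be a finite set and {A_i}_{i∈ι} pairwise disjoint measurable subsets of ℝ^d, each of Lebesgue measure v with 0 < v < ∞, with union M. Let θ_c ≠ 0, τ ∈ ℝ, η₀ ∈ ℝ, and let η, θ : M × ℝ → ℝ be such that for each time t the functions r ↦ η(r,t) and r ↦ θ(r,t) are constant on each A_i and integrable on M, and t ↦ η(r,t) is differentiable for each r. If for all r ∈ M and all t: τ·∂_t η(r,t) + η(r,t) = η₀ + (1/θ_c)·(1/v)·Σ_{i∈ι} 𝟙_{A_i}(r)·∫_{A_i} η(r',t)·θ(r',t) dr', then for all r ∈ M and all t: τ·∂_t η(r,t) + (1 − θ(r,t)/θ_c)·η(r,t) = η₀. -/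
open MeasureTheory Finset

/-- Derivation of the local law of perfect self-regulation (equation (psr)):
if the fields `η`, `θ` are constant on each fundamental domain `A i` (of
common volume `v`) and obey the nonlocal equation
`τ·∂ₜη + η = η₀ + (1/θ_c)·(1/v)·Σ_i 𝟙_{A_i}(r)·∫_{A_i} η·θ`, then they obey
the local equation `τ·∂ₜη + (1 − θ/θ_c)·η = η₀` on `M = ⋃ A i`. -/
theorem perfect_self_regulation_local_law
    {ι : Type*} [Fintype ι] {d : ℕ}
    (A : ι → Set (Fin d → ℝ))
    (hmeas : ∀ i, MeasurableSet (A i))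
    (hdisj : ∀ i j, i ≠ j → Disjoint (A i) (A j))
    (v : ENNReal) (hv0 : 0 < v) (hvtop : v ≠ ⊤)
    (hvol : ∀ i, volume (A i) = v)
    (M : Set (Fin d → ℝ)) (hM : M = ⋃ i, A i)
    (θc τ η₀ : ℝ) (hθc : θc ≠ 0)
    (η θ : (Fin d → ℝ) → ℝ → ℝ)
    (hηconst : ∀ i, ∀ t : ℝ, ∀ x ∈ A i, ∀ y ∈ A i, η x t = η y t)
    (hθconst : ∀ i, ∀ t : ℝ, ∀ x ∈ A i, ∀ y ∈ A i, θ x t = θ y t)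
    (hηint : ∀ t : ℝ, IntegrableOn (fun r => η r t) M volume)
    (hθint : ∀ t : ℝ, IntegrableOn (fun r => θ r t) M volume)
    (hdiff : ∀ r ∈ M, ∀ t : ℝ, DifferentiableAt ℝ (η r) t)
    (hode : ∀ r ∈ M, ∀ t : ℝ,
      τ * deriv (η r) t + η r t =
        η₀ + (1 / θc) * ((1 / v.toReal) *
          ∑ i, (A i).indicator (fun _ => (1 : ℝ)) r *
            (∫ x in A i, η x t * θ x t))) :
    ∀ r ∈ M, ∀ t : ℝ,
      τ * deriv (η r) t + (1 - θ r t / θc) * η r t = η₀ := by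
  intro r hr t
  have hode' := hode r hr t
  rw [hM] at hr
  obtain ⟨i, hi⟩ := Set.mem_iUnion.mp hr
  have hvR : v.toReal ≠ 0 := by
    simp [ENNReal.toReal_eq_zero_iff, hv0.ne', hvtop]
  have hint : (∫ x in A i, η x t * θ x t) = v.toReal * (η r t * θ r t) := by
    have : (∫ x in A i, η x t * θ x t) = ∫ _x in A i, η r t * θ r t := by
      refine setIntegral_congr_fun (hmeas i) (fun x hx => ?_)
      rw [hηconst i t x hx r hi, hθconst i t x hx r hi]
    rw [this, setIntegral_const, measureReal_def, hvol i, smul_eq_mul]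
  have hsum : (∑ j, (A j).indicator (fun _ => (1 : ℝ)) r *
      (∫ x in A j, η x t * θ x t)) = v.toReal * (η r t * θ r t) := by
    rw [Finset.sum_eq_single i]
    · rw [Set.indicator_of_mem hi, one_mul, hint]
    · intro j _ hj
      have : r ∉ A j := fun hrj => (hdisj j i hj).ne_of_mem hrj hi rfl
      rw [Set.indicator_of_notMem this, zero_mul]
    · intro h; exact absurd (Finset.mem_univ i) h
  rw [hsum] at hode'
  have : τ * deriv (η r) t + η r t = η₀ + η r t * θ r t / θc := by
    rw [hode']; field_simp; try ring
  linarith [mul_div_assoc (η r t) (θ r t) θc ▸ this,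
    (by field_simp; try ring : (1 - θ r t / θc) * η r t = η r t - η r t * θ r t / θc)]
end
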